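/- Let a be a positive integer and b, b' integers with b·b' ≡ 1 (mod a). Then for every integer γ, s(b', a; (b'·γ)/a, 0) = s(b, a; γ/a, 0). -/

import Mathlib

open scoped BigOperators

/-- The sawtooth function `((x))`: `x - ⌊x⌋ - 1/2` if `x` is not an integer, `0` otherwise. -/
noncomputable def sawtooth (x : ℝ) : ℝ :=
  if Int.fract x = 0 then 0 else Int.fract x - 1/2

/-- The Dedekind–Rademacher sum `s(b, a; x, y)`. -/
noncomputable def drSum (b : ℤ) (a : ℕ) (x y : ℝ) : ℝ :=
  ∑ j ∈ Finset.range a, sawtooth (x + b * ((j : ℝ) + y) / a) * sawtooth (((j : ℝ) + y) / a)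

/-!
Both sums only see their integer arguments modulo `a`, so they are sums over `ZMod a` of products
of the odd function `x ↦ ((x / a))`. The substitution `x ↦ -b' (γ + x)`, a bijection of `ZMod a`
since `b'` is a unit, turns one summand into the other: the two factors change places and both
change sign.
-/

open Finset

lemma sawtooth_add_intCast (x : ℝ) (n : ℤ) : sawtooth (x + n) = sawtooth x := by
  simp [sawtooth, Int.fract_add_intCast]

lemma sawtooth_neg (x : ℝ) : sawtooth (-x) = -sawtooth x := by
  unfold sawtooth
  by_cases h : Int.fract x = 0
  · simp [h, Int.fract_neg_eq_zero.mpr h]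
  · have hneg : Int.fract (-x) ≠ 0 := by
      rw [Int.fract_neg h]; linarith [Int.fract_lt_one x]
    rw [if_neg hneg, if_neg h, Int.fract_neg h]
    ring

lemma sum_odd_affine_mul_symm_of_mul_eq_one {R S : Type*} [CommRing R] [Fintype R] [CommRing S]
    (f : R → S) (hf : ∀ x, f (-x) = -f x) {b b' : R} (h : b * b' = 1) (γ : R) :
    ∑ x, f (b' * γ + b' * x) * f x = ∑ x, f (γ + b * x) * f x := by
  have hinj : Function.Injective fun x : R ↦ -(b' * γ + b' * x) := by
    intro x y hxy
    linear_combination (-b) * hxy + (y - x) * h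
  refine Fintype.sum_bijective _ (Finite.injective_iff_bijective.mp hinj) _ _ fun x ↦ ?_
  have hx : γ + b * -(b' * γ + b' * x) = -x := by linear_combination (-(γ + x)) * h
  rw [hx, hf, hf]
  ring

lemma sum_range_eq_sum_zmod {M : Type*} [AddCommMonoid M] (a : ℕ) [NeZero a] (g : ZMod a → M) :
    ∑ j ∈ range a, g j = ∑ x, g x :=
  sum_nbij' (fun j : ℕ ↦ (j : ZMod a)) ZMod.val (fun _ _ ↦ mem_univ _)
    (fun x _ ↦ mem_range.mpr x.val_lt) (fun _ hj ↦ ZMod.val_cast_of_lt (mem_range.mp hj))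
    (fun x _ ↦ ZMod.natCast_zmod_val x) fun _ _ ↦ rfl

noncomputable def zmodSawtooth (a : ℕ) (x : ZMod a) : ℝ :=
  sawtooth ((x.val : ℝ) / a)

section

variable {a : ℕ} [NeZero a]

lemma zmodSawtooth_intCast (m : ℤ) : zmodSawtooth a m = sawtooth ((m : ℝ) / a) := by
  have ha : (a : ℝ) ≠ 0 := NeZero.ne _
  have hm : (m : ℝ) / a = (((m : ZMod a).val : ℤ) : ℝ) / a + ((m / a : ℤ) : ℝ) := by
    rw [ZMod.val_intCast]
    field_simp
    exact_mod_cast (Int.emod_add_mul_ediv m a).symm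
  rw [hm, sawtooth_add_intCast, zmodSawtooth, Int.cast_natCast]

lemma zmodSawtooth_neg (x : ZMod a) : zmodSawtooth a (-x) = -zmodSawtooth a x := by
  have hx : -x = ((-(x.val : ℤ) : ℤ) : ZMod a) := by simp
  rw [hx, zmodSawtooth_intCast, Int.cast_neg, neg_div, sawtooth_neg, zmodSawtooth,
    Int.cast_natCast]

lemma drSum_intCast_div_eq_sum_zmod (b c : ℤ) :
    drSum b a ((c : ℝ) / a) 0 = ∑ x : ZMod a, zmodSawtooth a (c + b * x) * zmodSawtooth a x := by
  rw [drSum, ← sum_range_eq_sum_zmod]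
  refine sum_congr rfl fun j _ ↦ ?_
  have hcast : ((c : ZMod a) + b * (j : ZMod a)) = ((c + b * j : ℤ) : ZMod a) := by push_cast; rfl
  rw [hcast, zmodSawtooth_intCast, ← Int.cast_natCast (R := ZMod a) j, zmodSawtooth_intCast]
  push_cast
  ring_nf

end

theorem drSum_inverse_symmetry (a : ℕ) (ha : 0 < a) (b b' : ℤ)
    (hbb' : b * b' ≡ 1 [ZMOD (a : ℤ)]) (γ : ℤ) :
    drSum b' a ((b' : ℝ) * (γ : ℝ) / a) 0 = drSum b a ((γ : ℝ) / a) 0 := by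
  have : NeZero a := ⟨ha.ne'⟩
  have hunit : (b : ZMod a) * b' = 1 := by
    exact_mod_cast (ZMod.intCast_eq_intCast_iff _ _ _).mpr hbb'
  rw [← Int.cast_mul, drSum_intCast_div_eq_sum_zmod, drSum_intCast_div_eq_sum_zmod]
  push_cast
  exact sum_odd_affine_mul_symm_of_mul_eq_one _ zmodSawtooth_neg hunit _
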